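/- arXiv:2410.16142 — 2 statements merged into one kernel-verified Lean document; each statement's English description precedes it below -/
import Mathlib

section
/- Let D be an integral domain with quotient field K, E ⊆ K nonempty, and D' the integral closure of D in K. If Int^R(E,D) contains a non-constant polynomial, then E is a fractional subset of D', i.e., there is a nonzero a ∈ D with aE ⊆ D'. -/
open Polynomial

variable {K : Type*} [Field K]

/-- Evaluation of a rational function at a point of `K`. -/
noncomputable def rfEval (e : K) (φ : RatFunc K) : K :=
  RatFunc.eval (RingHom.id K) e φ

/-- `φ` is defined at every point of `E` (its reduced denominator does not vanish)
and maps `E` into `T`. -/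
def MapsInto (E T : Set K) (φ : RatFunc K) : Prop :=
  ∀ e ∈ E, Polynomial.eval e φ.denom ≠ 0 ∧ rfEval e φ ∈ T

theorem eval₂_id_eq_eval (e : K) (p : K[X]) :
    p.eval₂ (RingHom.id K) e = p.eval e := by first | rfl | simp

theorem denom_eval_ne_zero_of_dvd {x y z : RatFunc K} (h : z.denom ∣ x.denom * y.denom)
    {e : K} (hx : Polynomial.eval e x.denom ≠ 0) (hy : Polynomial.eval e y.denom ≠ 0) :
    Polynomial.eval e z.denom ≠ 0 := by
  obtain ⟨c, hc⟩ := h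
  intro h0
  apply mul_ne_zero hx hy
  have : Polynomial.eval e (x.denom * y.denom) = Polynomial.eval e z.denom * Polynomial.eval e c := by
    rw [hc, Polynomial.eval_mul]
  rw [Polynomial.eval_mul] at this
  rw [this, h0, zero_mul]

theorem rfEval_add {x y : RatFunc K} {e : K} (hx : Polynomial.eval e x.denom ≠ 0)
    (hy : Polynomial.eval e y.denom ≠ 0) : rfEval e (x + y) = rfEval e x + rfEval e y := by
  apply RatFunc.eval_add <;> rw [eval₂_id_eq_eval] <;> assumption

theorem rfEval_mul {x y : RatFunc K} {e : K} (hx : Polynomial.eval e x.denom ≠ 0)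
    (hy : Polynomial.eval e y.denom ≠ 0) : rfEval e (x * y) = rfEval e x * rfEval e y := by
  apply RatFunc.eval_mul <;> rw [eval₂_id_eq_eval] <;> assumption

theorem denom_const (c : K) : (algebraMap K (RatFunc K) c).denom = 1 := by
  have : algebraMap K (RatFunc K) c = algebraMap K[X] (RatFunc K) (Polynomial.C c) := by
    rw [RatFunc.algebraMap_C]; rfl
  rw [this, RatFunc.denom_algebraMap]

theorem rfEval_const (e c : K) : rfEval e (algebraMap K (RatFunc K) c) = c := by
  have : algebraMap K (RatFunc K) c = RatFunc.C c := rfl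
  rw [rfEval, this, RatFunc.eval_C]; rfl

/-- The ring of `D`-valued rational functions on `E`:
`Int^R(E,D) = {φ ∈ K(X) : φ(E) ⊆ D}`. -/
def IntR (E : Set K) (D : Subring K) : Subring (RatFunc K) where
  carrier := {φ | MapsInto E (D : Set K) φ}
  zero_mem' := by
    intro e _
    constructor
    · rw [RatFunc.denom_zero]; simp
    · have : rfEval e (0 : RatFunc K) = 0 := by rw [rfEval, RatFunc.eval_zero]
      rw [this]; exact D.zero_mem
  one_mem' := by
    intro e _
    constructor
    · rw [RatFunc.denom_one]; simp
    · have : rfEval e (1 : RatFunc K) = 1 := by rw [rfEval, RatFunc.eval_one]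
      rw [this]; exact D.one_mem
  add_mem' := by
    intro x y hx hy e he
    obtain ⟨hxd, hxv⟩ := hx e he
    obtain ⟨hyd, hyv⟩ := hy e he
    refine ⟨denom_eval_ne_zero_of_dvd (RatFunc.denom_add_dvd x y) hxd hyd, ?_⟩
    rw [rfEval_add hxd hyd]; exact D.add_mem hxv hyv
  mul_mem' := by
    intro x y hx hy e he
    obtain ⟨hxd, hxv⟩ := hx e he
    obtain ⟨hyd, hyv⟩ := hy e he
    refine ⟨denom_eval_ne_zero_of_dvd (RatFunc.denom_mul_dvd x y) hxd hyd, ?_⟩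
    rw [rfEval_mul hxd hyd]; exact D.mul_mem hxv hyv
  neg_mem' := by
    intro x hx e he
    obtain ⟨hxd, hxv⟩ := hx e he
    have hconst : Polynomial.eval e (algebraMap K (RatFunc K) (-1 : K)).denom ≠ 0 := by
      rw [denom_const]; simp
    have hneg : -x = algebraMap K (RatFunc K) (-1 : K) * x := by
      rw [map_neg, map_one, neg_one_mul]
    constructor
    · rw [hneg]
      exact denom_eval_ne_zero_of_dvd (RatFunc.denom_mul_dvd _ x)
        (by rw [denom_const]; simp) hxd
    · rw [hneg, rfEval_mul hconst hxd, rfEval_const]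
      rw [neg_one_mul]
      exact D.neg_mem hxv

theorem mem_IntR_iff {E : Set K} {D : Subring K} {φ : RatFunc K} :
    φ ∈ IntR E D ↔ MapsInto E (D : Set K) φ := Iff.rfl

theorem const_mem_IntR {E : Set K} {D : Subring K} {d : K} (hd : d ∈ D) :
    algebraMap K (RatFunc K) d ∈ IntR E D := by
  intro e _
  refine ⟨by rw [denom_const]; simp, ?_⟩
  rw [rfEval_const]; exact hd

/-- The canonical map `D → Int^R(E,D)` sending `d` to the constant rational function `d`. -/
noncomputable def constHom (E : Set K) (D : Subring K) : D →+* IntR E D where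
  toFun d := ⟨algebraMap K (RatFunc K) (d : K), const_mem_IntR d.2⟩
  map_one' := by ext; simp
  map_mul' x y := by ext; simp
  map_zero' := by ext; simp
  map_add' x y := by ext; simp

/-- Evaluation at a point `a ∈ E`, as a ring homomorphism `Int^R(E,D) → D`. -/
noncomputable def evalHom (E : Set K) (D : Subring K) (a : K) (ha : a ∈ E) :
    IntR E D →+* D where
  toFun φ := ⟨rfEval a φ.1, (φ.2 a ha).2⟩
  map_one' := by
    ext
    show rfEval a (1 : RatFunc K) = 1
    rw [rfEval, RatFunc.eval_one]
  map_mul' x y := by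
    ext
    exact rfEval_mul (x.2 a ha).1 (y.2 a ha).1
  map_zero' := by
    ext
    show rfEval a (0 : RatFunc K) = 0
    rw [rfEval, RatFunc.eval_zero]
  map_add' x y := by
    ext
    exact rfEval_add (x.2 a ha).1 (y.2 a ha).1

/-- `K` is the quotient field of `D`. -/
def IsQuotField (D : Subring K) : Prop :=
  ∀ x : K, ∃ a ∈ D, ∃ b ∈ D, b ≠ 0 ∧ x = a / b
/-- The localization `S⁻¹A` of a subring `A` of a field at a multiplicative submonoid
`S` of `A` not containing `0`, realized as a subring of the ambient field. -/
def locSubring {F : Type*} [Field F] (A : Subring F) (S : Submonoid A)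
    (hS : ∀ s ∈ S, s ≠ (0 : A)) : Subring F where
  carrier := {x | ∃ a : A, ∃ s ∈ S, x = (a : F) / (s : F)}
  zero_mem' := ⟨0, 1, S.one_mem, by simp⟩
  one_mem' := ⟨1, 1, S.one_mem, by simp⟩
  add_mem' := by
    rintro x y ⟨a, s, hs, rfl⟩ ⟨b, t, ht, rfl⟩
    refine ⟨a * t + b * s, s * t, S.mul_mem hs ht, ?_⟩
    have hs0 : (s : F) ≠ 0 := fun h => hS s hs (Subtype.ext h)
    have ht0 : (t : F) ≠ 0 := fun h => hS t ht (Subtype.ext h)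
    push_cast
    field_simp
  mul_mem' := by
    rintro x y ⟨a, s, hs, rfl⟩ ⟨b, t, ht, rfl⟩
    refine ⟨a * b, s * t, S.mul_mem hs ht, ?_⟩
    push_cast
    field_simp
  neg_mem' := by
    rintro x ⟨a, s, hs, rfl⟩
    exact ⟨-a, s, hs, by push_cast; ring⟩

/-- The "inverse" `{x ∈ F : xS ⊆ A}` of a subset `S` of a field `F`, relative to
a subring `A` of `F`. -/
def dualSet {F : Type*} [Field F] (A : Subring F) (S : Set F) : Set F :=
  {x | ∀ y ∈ S, x * y ∈ A}

/-- An ideal of a subring of `F`, viewed as a subset of `F`. -/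
def idealSet {F : Type*} [Field F] (A : Subring F) (I : Ideal A) : Set F :=
  (fun a : A => (a : F)) '' (I : Set A)

/-- The `v`-closure (divisorial closure) of a subset of `F` relative to a subring `A`. -/
def vSet {F : Type*} [Field F] (A : Subring F) (S : Set F) : Set F :=
  dualSet A (dualSet A S)

/-- The `t`-closure of an ideal of a subring `A` of `F`, as a subset of `F`. -/
def tSet {F : Type*} [Field F] (A : Subring F) (I : Ideal A) : Set F :=
  {x | ∃ J : Ideal A, J ≤ I ∧ J.FG ∧ J ≠ ⊥ ∧ x ∈ vSet A (idealSet A J)}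

theorem primeCompl_ne_zero {R : Type*} [CommRing R] [Nontrivial R] (P : Ideal R) [P.IsPrime] :
    ∀ s ∈ P.primeCompl, s ≠ (0 : R) := by
  intro s hs h0
  exact hs (by rw [h0]; exact P.zero_mem)

/-!
Clear the denominators of a non-constant `p` with `p(E) ⊆ D` to get `q = d p ∈ D[X]`.
For `e ∈ E` the polynomial `q - q(e)` lies in `D[X]`, vanishes at `e` and has the same
leading coefficient `c` as `q`, so `c e` is integral over `D`.
-/

theorem isIntegral_leadingCoeff_smul_of_aeval_eq_algebraMap {R A : Type*} [CommRing R]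
    [CommRing A] [Algebra R A] {q : R[X]} (hq : 0 < q.natDegree) {x : A} {r : R}
    (hx : aeval x q = algebraMap R A r) : IsIntegral R (q.leadingCoeff • x) := by
  have hlead : (q - C r).leadingCoeff = q.leadingCoeff :=
    leadingCoeff_sub_of_degree_lt <| degree_C_le.trans_lt <| natDegree_pos_iff_degree_pos.mp hq
  rw [← hlead]
  exact isIntegral_leadingCoeff_smul _ x (by simp [hx])

theorem IsQuotField.exists_C_mul_mem_lifts {D : Subring K} (hD : IsQuotField D) (p : K[X]) :
    ∃ d ∈ D, d ≠ 0 ∧ C d * p ∈ lifts (algebraMap D K) := by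
  induction p using Polynomial.induction_on' with
  | add p q hp hq =>
    obtain ⟨d₁, hd₁, hd₁0, hp⟩ := hp
    obtain ⟨d₂, hd₂, hd₂0, hq⟩ := hq
    refine ⟨d₁ * d₂, D.mul_mem hd₁ hd₂, mul_ne_zero hd₁0 hd₂0, ?_⟩
    have hC : ∀ d ∈ D, C d ∈ lifts (algebraMap D K) := fun d hd =>
      C_mem_lifts (algebraMap D K) ⟨d, hd⟩
    have key : C (d₁ * d₂) * (p + q) = C d₂ * (C d₁ * p) + C d₁ * (C d₂ * q) := by
      simp only [C_mul]; ring
    rw [key]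
    exact add_mem (mul_mem (hC d₂ hd₂) hp) (mul_mem (hC d₁ hd₁) hq)
  | monomial n a =>
    obtain ⟨b, hb, c, hc, hc0, rfl⟩ := hD a
    refine ⟨c, hc, hc0, ?_⟩
    rw [C_mul_monomial, mul_div_cancel₀ b hc0]
    exact monomial_mem_lifts n ⟨⟨b, hb⟩, rfl⟩

theorem eval_mem_of_algebraMap_mem_IntR {E : Set K} {D : Subring K} {p : K[X]}
    (hp : algebraMap K[X] (RatFunc K) p ∈ IntR E D) {e : K} (he : e ∈ E) : p.eval e ∈ D := by
  simpa [rfEval, RatFunc.eval_algebraMap] using (hp e he).2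

theorem fractional_of_nonconstant_poly_mem_general {K : Type*} [Field K] (D : Subring K) (E : Set K)
    (hFrac : IsQuotField D)
    (h : ∃ p : Polynomial K, 0 < p.natDegree ∧
      algebraMap (Polynomial K) (RatFunc K) p ∈ IntR E D) :
    ∃ a : K, a ∈ D ∧ a ≠ 0 ∧ ∀ e ∈ E, a * e ∈ integralClosure D K := by
  obtain ⟨p, hdeg, hp⟩ := h
  obtain ⟨d, hd, hd0, hlift⟩ := hFrac.exists_C_mul_mem_lifts p
  obtain ⟨q, hq⟩ := (mem_lifts _).mp hlift
  have hqdeg : 0 < q.natDegree := by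
    rwa [← natDegree_map_eq_of_injective (FaithfulSMul.algebraMap_injective D K), hq,
      natDegree_C_mul hd0]
  refine ⟨q.leadingCoeff, q.leadingCoeff.2, ?_, fun e he => ?_⟩
  · exact_mod_cast leadingCoeff_ne_zero.mpr (ne_zero_of_natDegree_gt hqdeg)
  · have hpe := eval_mem_of_algebraMap_mem_IntR hp he
    have hqe : aeval e q = algebraMap D K ⟨d * p.eval e, D.mul_mem hd hpe⟩ := by
      rw [aeval_def, eval₂_eq_eval_map, hq, eval_mul, eval_C]; rfl
    exact isIntegral_leadingCoeff_smul_of_aeval_eq_algebraMap hqdeg hqe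

/-- if `Int^R(E,D)` contains a non-constant polynomial, then `E` is a
fractional subset of the integral closure `D'` of `D` in `K`. -/
theorem fractional_of_nonconstant_poly_mem {K : Type*} [Field K] (D : Subring K) (E : Set K)
    (hFrac : IsQuotField D) (hEne : E.Nonempty)
    (h : ∃ p : Polynomial K, 0 < p.natDegree ∧
      algebraMap (Polynomial K) (RatFunc K) p ∈ IntR E D) :
    ∃ a : K, a ∈ D ∧ a ≠ 0 ∧ ∀ e ∈ E, a * e ∈ integralClosure D K :=
  fractional_of_nonconstant_poly_mem_general D E hFrac h
end

section
/- Let D be an integral domain with quotient field K and E ⊆ K nonempty. The D-module Int^R(E,D) is flat if and only if it is faithfully flat. (Key step: for every maximal ideal 𝔪 of D, 𝔪·Int^R(E,D) ≠ Int^R(E,D).) -/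
open Polynomial

variable {K : Type*} [Field K]

/-- `Int^R(E,D)` is a `D`-algebra (hence a `D`-module) via the constant embedding. -/
noncomputable instance intRAlgebra {K : Type*} [Field K] (E : Set K) (D : Subring K) :
    Algebra D (IntR E D) :=
  (constHom E D).toAlgebra


/-! Evaluation at a point of `E` is a `D`-algebra retraction `Int^R(E,D) → D`, so every prime of
`D` is the contraction of a prime of `Int^R(E,D)`; for a flat algebra this surjectivity on spectra
is faithful flatness. -/

theorem PrimeSpectrum.comap_surjective_of_comp_eq_id {R S : Type*} [CommSemiring R]
    [CommSemiring S] {f : R →+* S} (g : S →+* R) (hgf : g.comp f = RingHom.id R) :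
    Function.Surjective (PrimeSpectrum.comap f) := fun P =>
  ⟨PrimeSpectrum.comap g P, by rw [← PrimeSpectrum.comap_comp_apply, hgf, PrimeSpectrum.comap_id]⟩

theorem Module.FaithfullyFlat.of_algHom_to_base {A B : Type*} [CommRing A] [CommRing B]
    [Algebra A B] [Module.Flat A B] (σ : B →ₐ[A] A) : Module.FaithfullyFlat A B :=
  Module.FaithfullyFlat.of_comap_surjective <|
    PrimeSpectrum.comap_surjective_of_comp_eq_id σ.toRingHom σ.comp_algebraMap

noncomputable def evalAlgHom (E : Set K) (D : Subring K) (a : K) (ha : a ∈ E) :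
    IntR E D →ₐ[D] D :=
  { evalHom E D a ha with
    commutes' := fun d => Subtype.ext (rfEval_const a d) }

theorem intR_flat_iff_faithfullyFlat_general {K : Type*} [Field K] (D : Subring K) (E : Set K)
    (hEne : E.Nonempty) :
    Module.Flat D (IntR E D) ↔ Module.FaithfullyFlat D (IntR E D) := by
  obtain ⟨a, ha⟩ := hEne
  exact ⟨fun _ => .of_algHom_to_base (evalAlgHom E D a ha), fun h => h.toFlat⟩

/-- the `D`-module `Int^R(E,D)` is flat iff it is faithfully flat. -/
theorem intR_flat_iff_faithfullyFlat {K : Type*} [Field K] (D : Subring K) (E : Set K)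
    (hFrac : IsQuotField D) (hEne : E.Nonempty) :
    Module.Flat D (IntR E D) ↔ Module.FaithfullyFlat D (IntR E D) :=
  intR_flat_iff_faithfullyFlat_general D E hEne
end
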